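/- arXiv:2605.15746 — 7 statements merged into one kernel-verified Lean document; each statement's English description precedes it below -/
import Mathlib

section
/- Let v ~ N(p₀, σv²), u ~ N(0, σu²), ε ~ N(0, σε²) be independent Gaussian random variables, with σv, σu > 0 and σε ≥ 0. Set x = β(v − p₀) with β = √(σu² + σε²)/σv, ỹ = x + u + ε, and p = p₀ + λ·ỹ with λ = σv/(2√(σu² + σε²)). Then E[(v − p)·x] = (1/2)·σv·√(σu² + σε²). -/
/-!
Write `W = v - p₀` for the insider's private signal and `N = u + ε` for the noise in the order
flow seen by the market maker. Then `x = β W` and `v - p = (1 - λβ) W - λ N`, so the profit is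
`β (1 - λβ) W² - λβ W N`. Since `N` is centred and independent of `W`, the cross term has
expectation zero, leaving `β (1 - λβ) σv²`; in equilibrium `λβ = 1/2`, which gives
`σv √(σu² + σε²) / 2`.
-/

open MeasureTheory ProbabilityTheory

section

variable {Ω : Type*} [MeasurableSpace Ω] {P : Measure Ω}

namespace ProbabilityTheory.HasLaw

variable {X : Ω → ℝ} {μ : ℝ} {v : NNReal}

lemma of_map_eq_gaussianReal (h : P.map X = gaussianReal μ v) : HasLaw X (gaussianReal μ v) P :=
  ⟨aemeasurable_of_map_neZero (by rw [h]; infer_instance), h⟩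

lemma integral_eq_of_gaussianReal (hX : HasLaw X (gaussianReal μ v) P) : P[X] = μ := by
  rw [hX.integral_eq, integral_id_gaussianReal]

lemma integral_sub_sq_of_gaussianReal (hX : HasLaw X (gaussianReal μ v) P) :
    ∫ ω, (X ω - μ) ^ 2 ∂P = v := by
  rw [← hX.integral_eq_of_gaussianReal, ← variance_eq_integral hX.aemeasurable, hX.variance_eq,
    variance_id_gaussianReal]

lemma memLp_two_of_gaussianReal (hX : HasLaw X (gaussianReal μ v) P) : MemLp X 2 P :=
  hX.hasGaussianLaw.memLp_two

lemma integrable_of_gaussianReal (hX : HasLaw X (gaussianReal μ v) P) : Integrable X P :=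
  hX.hasGaussianLaw.integrable

end ProbabilityTheory.HasLaw

theorem integral_linear_pricing_profit [IsFiniteMeasure P] {W N : Ω → ℝ} (hWN : IndepFun W N P)
    (hW : MemLp W 2 P) (hN : Integrable N P) (hN0 : P[N] = 0) (β lam : ℝ) :
    ∫ ω, (W ω - lam * (β * W ω + N ω)) * (β * W ω) ∂P = β * (1 - lam * β) * ∫ ω, W ω ^ 2 ∂P := by
  have hWN0 : ∫ ω, W ω * N ω ∂P = 0 := by
    rw [hWN.integral_fun_mul_eq_mul_integral hW.1 hN.1, hN0, mul_zero]
  have hWN_int : Integrable (fun ω => W ω * N ω) P :=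
    hWN.integrable_mul (hW.integrable one_le_two) hN
  calc ∫ ω, (W ω - lam * (β * W ω + N ω)) * (β * W ω) ∂P
      = ∫ ω, (β * (1 - lam * β) * W ω ^ 2 - lam * β * (W ω * N ω)) ∂P := by
        congr 1 with ω; ring
    _ = β * (1 - lam * β) * ∫ ω, W ω ^ 2 ∂P := by
        rw [integral_sub (hW.integrable_sq.const_mul _) (hWN_int.const_mul _), integral_const_mul,
          integral_const_mul, hWN0, mul_zero, sub_zero]

-- The degenerate cases `a = 0` or `s = 0` hold because division by zero gives `0`.
lemma kyle_profit_coefficient (a s : ℝ) :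
    s / a * (1 - a / (2 * s) * (s / a)) * a ^ 2 = 1 / 2 * a * s := by
  rcases eq_or_ne a 0 with rfl | ha
  · simp
  rcases eq_or_ne s 0 with rfl | hs
  · simp
  field_simp
  ring

end

/-- Informed trader's equilibrium expected profit in the Kyle model with
Gaussian privacy noise. -/
theorem stmt_4 {Ω : Type*} [MeasurableSpace Ω] (P : Measure Ω) [IsProbabilityMeasure P]
    (v u ε : Ω → ℝ) (p₀ σv σu σε : ℝ)
    (hvd : P.map v = gaussianReal p₀ ⟨σv ^ 2, by positivity⟩)
    (hud : P.map u = gaussianReal 0 ⟨σu ^ 2, by positivity⟩)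
    (hed : P.map ε = gaussianReal 0 ⟨σε ^ 2, by positivity⟩)
    (hindep : iIndepFun ![v, u, ε] P)
    (β lam : ℝ)
    (hβ : β = Real.sqrt (σu ^ 2 + σε ^ 2) / σv)
    (hlam : lam = σv / (2 * Real.sqrt (σu ^ 2 + σε ^ 2)))
    (x p : Ω → ℝ)
    (hx : ∀ ω, x ω = β * (v ω - p₀))
    (hp : ∀ ω, p ω = p₀ + lam * (x ω + u ω + ε ω)) :
    ∫ ω, (v ω - p ω) * x ω ∂P = (1 / 2) * σv * Real.sqrt (σu ^ 2 + σε ^ 2) := by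
  have hvL := HasLaw.of_map_eq_gaussianReal hvd
  have huL := HasLaw.of_map_eq_gaussianReal hud
  have heL := HasLaw.of_map_eq_gaussianReal hed
  have hindep_noise : IndepFun (fun ω => v ω - p₀) (fun ω => u ω + ε ω) P := by
    have h := hindep.indepFun_prodMk₀
      (fun i => by fin_cases i <;> simp [hvL.aemeasurable, huL.aemeasurable, heL.aemeasurable])
      1 2 0 (by decide) (by decide)
    exact h.symm.comp (measurable_id.sub_const p₀) (measurable_fst.add measurable_snd)
  have hnoise_mean : P[fun ω => u ω + ε ω] = 0 := by
    rw [integral_add huL.integrable_of_gaussianReal heL.integrable_of_gaussianReal,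
      huL.integral_eq_of_gaussianReal, heL.integral_eq_of_gaussianReal, add_zero]
  calc ∫ ω, (v ω - p ω) * x ω ∂P
      = ∫ ω, ((v ω - p₀) - lam * (β * (v ω - p₀) + (u ω + ε ω))) * (β * (v ω - p₀)) ∂P := by
        congr 1 with ω; rw [hp, hx]; ring
    _ = β * (1 - lam * β) * σv ^ 2 := by
        rw [integral_linear_pricing_profit hindep_noise
          (hvL.memLp_two_of_gaussianReal.sub (memLp_const p₀))
          (huL.integrable_of_gaussianReal.add heL.integrable_of_gaussianReal) hnoise_mean,
          hvL.integral_sub_sq_of_gaussianReal]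
        rfl
    _ = (1 / 2) * σv * Real.sqrt (σu ^ 2 + σε ^ 2) := by
        rw [hβ, hlam, kyle_profit_coefficient]
end

section
/- Under the same setup, the market maker's expected profit on the real flow satisfies E[(p − v)·(x + u)] = −σv·σε²/(2√(σu² + σε²)), which is strictly negative whenever σε > 0 and zero when σε = 0. -/
/-!
With `V = v - p₀`, both `p - v = (λβ - 1) V + λ u + λ ε` and the real flow `x + u = β V + u` are
linear in the independent centred variables `V, u, ε`, so only diagonal terms survive and the
expected profit is `(λβ - 1) β σv² + λ σu²`. In equilibrium `λβ = 1/2`, so with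
`s = √(σu² + σε²)` this is `σv (σu² - s²) / (2 s) = -σv σε² / (2 s)`.
-/

open MeasureTheory ProbabilityTheory
open scoped NNReal

namespace ProbabilityTheory

variable {Ω : Type*} [MeasurableSpace Ω] {P : Measure Ω}

theorem integral_sum_mul_sum_of_iIndepFun {ι : Type*} [Fintype ι]
    {Z : ι → Ω → ℝ} (hZ : iIndepFun Z P) (hZ2 : ∀ i, MemLp (Z i) 2 P)
    (hZ0 : ∀ i, ∫ ω, Z i ω ∂P = 0) (a b : ι → ℝ) :
    ∫ ω, (∑ i, a i * Z i ω) * (∑ j, b j * Z j ω) ∂P = ∑ i, a i * b i * ∫ ω, Z i ω ^ 2 ∂P := by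
  classical
  have hprod : ∀ i j, ∫ ω, Z i ω * Z j ω ∂P = if i = j then ∫ ω, Z i ω ^ 2 ∂P else 0 := by
    intro i j
    split_ifs with hij
    · simp only [hij, sq]
    · rw [(hZ.indepFun hij).integral_fun_mul_eq_mul_integral (hZ2 i).aestronglyMeasurable
        (hZ2 j).aestronglyMeasurable, hZ0 i, zero_mul]
  have hint : ∀ i j, Integrable (fun ω ↦ a i * b j * (Z i ω * Z j ω)) P :=
    fun i j ↦ ((hZ2 i).integrable_mul (hZ2 j)).const_mul _
  calc ∫ ω, (∑ i, a i * Z i ω) * (∑ j, b j * Z j ω) ∂P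
      = ∫ ω, ∑ i, ∑ j, a i * b j * (Z i ω * Z j ω) ∂P := by
        congr with ω
        rw [Finset.sum_mul_sum]
        exact Finset.sum_congr rfl fun i _ ↦ Finset.sum_congr rfl fun j _ ↦ by ring
    _ = ∑ i, ∑ j, a i * b j * ∫ ω, Z i ω * Z j ω ∂P := by
        rw [integral_finsetSum _ fun i _ ↦ integrable_finsetSum _ fun j _ ↦ hint i j]
        refine Finset.sum_congr rfl fun i _ ↦ ?_
        rw [integral_finsetSum _ fun j _ ↦ hint i j]
        simp only [integral_const_mul]
    _ = ∑ i, a i * b i * ∫ ω, Z i ω ^ 2 ∂P := by simp [hprod]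

lemma hasLaw_of_map_eq_gaussianReal {X : Ω → ℝ} {m : ℝ} {w : ℝ≥0}
    (h : P.map X = gaussianReal m w) : HasLaw X (gaussianReal m w) P where
  aemeasurable := by
    by_contra hX
    rw [Measure.map_of_not_aemeasurable hX] at h
    exact IsProbabilityMeasure.ne_zero _ h.symm
  map_eq := h

lemma HasLaw.memLp_two_of_gaussianReal_s6 {X : Ω → ℝ} {m : ℝ} {w : ℝ≥0}
    (h : HasLaw X (gaussianReal m w) P) : MemLp X 2 P :=
  h.hasGaussianLaw.memLp_two

lemma HasLaw.integral_eq_of_gaussianReal_s6 {X : Ω → ℝ} {m : ℝ} {w : ℝ≥0}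
    (h : HasLaw X (gaussianReal m w) P) : ∫ ω, X ω ∂P = m :=
  h.integral_eq.trans integral_id_gaussianReal

lemma HasLaw.variance_eq_of_gaussianReal {X : Ω → ℝ} {m : ℝ} {w : ℝ≥0}
    (h : HasLaw X (gaussianReal m w) P) : Var[X; P] = w :=
  h.variance_eq.trans variance_id_gaussianReal

theorem integral_kyle_profit_of_linear_strategy [IsProbabilityMeasure P] {v u ε : Ω → ℝ}
    (hindep : iIndepFun ![v, u, ε] P) (hv : MemLp v 2 P) (hu : MemLp u 2 P) (hε : MemLp ε 2 P)
    {p₀ : ℝ} (hv₀ : ∫ ω, v ω ∂P = p₀) (hu₀ : ∫ ω, u ω ∂P = 0) (hε₀ : ∫ ω, ε ω ∂P = 0)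
    (β lam : ℝ) :
    ∫ ω, (p₀ + lam * (β * (v ω - p₀) + u ω + ε ω) - v ω) * (β * (v ω - p₀) + u ω) ∂P
      = (lam * β - 1) * β * Var[v; P] + lam * Var[u; P] := by
  set Z : Fin 3 → Ω → ℝ := ![fun ω ↦ v ω - p₀, u, ε]
  have hZ : iIndepFun Z P := by
    convert hindep.comp ![(· - p₀), id, id] (by intro i; fin_cases i <;> simp <;> fun_prop) using 1
    funext i
    fin_cases i <;> rfl
  have hZ2 : ∀ i, MemLp (Z i) 2 P := by
    intro i
    fin_cases i
    exacts [hv.sub (memLp_const p₀), hu, hε]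
  have hZ0 : ∀ i, ∫ ω, Z i ω ∂P = 0 := by
    intro i
    fin_cases i
    · simp [Z, integral_sub (hv.integrable one_le_two) (integrable_const p₀), hv₀]
    exacts [hu₀, hε₀]
  calc _ = ∫ ω, (∑ i, ![lam * β - 1, lam, lam] i * Z i ω) * (∑ j, ![β, 1, 0] j * Z j ω) ∂P := by
        congr with ω
        simp only [Fin.sum_univ_three, Z, Fin.isValue, Matrix.cons_val_zero, Matrix.cons_val_one,
          Matrix.cons_val_two, Matrix.head_cons, Matrix.tail_cons]
        ring
    _ = _ := integral_sum_mul_sum_of_iIndepFun hZ hZ2 hZ0 _ _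
    _ = _ := by
        simp [Fin.sum_univ_three, Z, variance_eq_integral hv.aemeasurable,
          variance_eq_integral hu.aemeasurable, hv₀, hu₀]

end ProbabilityTheory

lemma kyle_equilibrium_profit_eq {σv σu σε : ℝ} (hv : σv ≠ 0) (hs : 0 < σu ^ 2 + σε ^ 2) :
    (σv / (2 * √(σu ^ 2 + σε ^ 2)) * (√(σu ^ 2 + σε ^ 2) / σv) - 1) * (√(σu ^ 2 + σε ^ 2) / σv)
        * σv ^ 2 + σv / (2 * √(σu ^ 2 + σε ^ 2)) * σu ^ 2
      = -(σv * σε ^ 2 / (2 * √(σu ^ 2 + σε ^ 2))) := by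
  have hsq : √(σu ^ 2 + σε ^ 2) ^ 2 = σu ^ 2 + σε ^ 2 := Real.sq_sqrt hs.le
  field_simp
  linear_combination -hsq

/-- Market maker's expected profit on the real flow (the negative privacy subsidy) in the Kyle model with
Gaussian privacy noise. -/
theorem stmt_6 {Ω : Type*} [MeasurableSpace Ω] (P : Measure Ω) [IsProbabilityMeasure P]
    (v u ε : Ω → ℝ) (p₀ σv σu σε : ℝ) (hv : 0 < σv) (hu : 0 < σu)
    (hvd : P.map v = gaussianReal p₀ ⟨σv ^ 2, by positivity⟩)
    (hud : P.map u = gaussianReal 0 ⟨σu ^ 2, by positivity⟩)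
    (hed : P.map ε = gaussianReal 0 ⟨σε ^ 2, by positivity⟩)
    (hindep : iIndepFun ![v, u, ε] P)
    (β lam : ℝ)
    (hβ : β = Real.sqrt (σu ^ 2 + σε ^ 2) / σv)
    (hlam : lam = σv / (2 * Real.sqrt (σu ^ 2 + σε ^ 2)))
    (x p : Ω → ℝ)
    (hx : ∀ ω, x ω = β * (v ω - p₀))
    (hp : ∀ ω, p ω = p₀ + lam * (x ω + u ω + ε ω)) :
    ∫ ω, (p ω - v ω) * (x ω + u ω) ∂P
      = -(σv * σε ^ 2 / (2 * Real.sqrt (σu ^ 2 + σε ^ 2))) ∧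
    (0 < σε → ∫ ω, (p ω - v ω) * (x ω + u ω) ∂P < 0) ∧
    (σε = 0 → ∫ ω, (p ω - v ω) * (x ω + u ω) ∂P = 0) := by
  have hvlaw := hasLaw_of_map_eq_gaussianReal hvd
  have hulaw := hasLaw_of_map_eq_gaussianReal hud
  have hεlaw := hasLaw_of_map_eq_gaussianReal hed
  have hprofit : ∫ ω, (p ω - v ω) * (x ω + u ω) ∂P
      = -(σv * σε ^ 2 / (2 * √(σu ^ 2 + σε ^ 2))) := calc
    _ = ∫ ω, (p₀ + lam * (β * (v ω - p₀) + u ω + ε ω) - v ω) * (β * (v ω - p₀) + u ω) ∂P := by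
      simp only [hp, hx]
    _ = (lam * β - 1) * β * Var[v; P] + lam * Var[u; P] :=
      integral_kyle_profit_of_linear_strategy hindep hvlaw.memLp_two_of_gaussianReal_s6
        hulaw.memLp_two_of_gaussianReal_s6 hεlaw.memLp_two_of_gaussianReal_s6
        hvlaw.integral_eq_of_gaussianReal_s6 hulaw.integral_eq_of_gaussianReal_s6
        hεlaw.integral_eq_of_gaussianReal_s6 β lam
    _ = _ := by
      rw [hvlaw.variance_eq_of_gaussianReal, hulaw.variance_eq_of_gaussianReal, hβ, hlam]
      exact kyle_equilibrium_profit_eq hv.ne' (by positivity)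
  refine ⟨hprofit, fun hε ↦ ?_, fun hε ↦ ?_⟩
  · rw [hprofit, neg_lt_zero]
    positivity
  · simp [hprofit, hε]
end

section
/- For fixed σv, σu > 0, the second derivative of the privacy subsidy S(σε) = σv·σε²/(2·√(σu² + σε²)) with respect to σε equals σv·σu²·(2σu² − σε²)/(2·(σu² + σε²)^(5/2)); hence S is strictly convex on (0, √2·σu) and strictly concave on (√2·σu, ∞), with a unique inflection point at σε = √2·σu. -/
/-!
With `Q = σu² + s² > 0` and `√Q² = Q`, two applications of the quotient rule give the second
derivative `σv σu² (2σu² − s²) / (2 Q^(5/2))`, whose sign is that of `2σu² − s²`; convexity,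
concavity and the location of the inflection point then follow from the second-derivative test.
-/

open Real Set

namespace PrivacySubsidy

noncomputable def subsidy (σv σu s : ℝ) : ℝ := σv * s ^ 2 / (2 * √(σu ^ 2 + s ^ 2))

noncomputable def subsidyDeriv (σv σu s : ℝ) : ℝ :=
  σv * s * (2 * σu ^ 2 + s ^ 2) / (2 * (σu ^ 2 + s ^ 2) * √(σu ^ 2 + s ^ 2))

noncomputable def subsidyDeriv2 (σv σu s : ℝ) : ℝ :=
  σv * σu ^ 2 * (2 * σu ^ 2 - s ^ 2) / (2 * (σu ^ 2 + s ^ 2) ^ ((5 : ℝ) / 2))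

variable {σv σu : ℝ}

lemma rpow_five_halves {x : ℝ} (hx : 0 < x) : x ^ ((5 : ℝ) / 2) = x ^ 2 * √x := by
  rw [show (5 : ℝ) / 2 = (2 : ℕ) + 1 / 2 by norm_num, rpow_add hx, rpow_natCast, sqrt_eq_rpow]

lemma hasDerivAt_sqrt_sq_add (hu : σu ≠ 0) (s : ℝ) :
    HasDerivAt (fun x => √(σu ^ 2 + x ^ 2)) (s / √(σu ^ 2 + s ^ 2)) s := by
  refine (((hasDerivAt_pow 2 s).const_add (σu ^ 2)).sqrt (by positivity)).congr_deriv ?_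
  field_simp
  ring

lemma hasDerivAt_subsidy (hu : σu ≠ 0) (s : ℝ) :
    HasDerivAt (subsidy σv σu) (subsidyDeriv σv σu s) s := by
  have hQ : 0 < σu ^ 2 + s ^ 2 := by positivity
  have hr : √(σu ^ 2 + s ^ 2) ^ 2 = σu ^ 2 + s ^ 2 := sq_sqrt hQ.le
  have : √(σu ^ 2 + s ^ 2) ≠ 0 := (sqrt_pos.2 hQ).ne'
  have hnum : HasDerivAt (fun x => σv * x ^ 2) (σv * (2 * s)) s := by
    simpa using (hasDerivAt_pow 2 s).const_mul σv
  refine (hnum.fun_div ((hasDerivAt_sqrt_sq_add hu s).const_mul 2) (by positivity)).congr_deriv ?_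
  unfold subsidyDeriv
  field_simp
  linear_combination σv * s ^ 3 * hr

lemma hasDerivAt_subsidyDeriv (hu : σu ≠ 0) (s : ℝ) :
    HasDerivAt (subsidyDeriv σv σu) (subsidyDeriv2 σv σu s) s := by
  have hQ : 0 < σu ^ 2 + s ^ 2 := by positivity
  have hr : √(σu ^ 2 + s ^ 2) ^ 2 = σu ^ 2 + s ^ 2 := sq_sqrt hQ.le
  have : √(σu ^ 2 + s ^ 2) ≠ 0 := (sqrt_pos.2 hQ).ne'
  have hnum : HasDerivAt (fun x => σv * x * (2 * σu ^ 2 + x ^ 2))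
      (σv * (2 * σu ^ 2 + s ^ 2) + σv * s * (2 * s)) s := by
    have h1 : HasDerivAt (fun x => σv * x) σv s := by simpa using (hasDerivAt_id s).const_mul σv
    simpa using h1.fun_mul ((hasDerivAt_pow 2 s).const_add (2 * σu ^ 2))
  have hden := (((hasDerivAt_pow 2 s).const_add (σu ^ 2)).const_mul 2).fun_mul
    (hasDerivAt_sqrt_sq_add hu s)
  refine (hnum.fun_div hden (by positivity)).congr_deriv ?_
  unfold subsidyDeriv2
  rw [rpow_five_halves hQ]
  field_simp
  linear_combination σv * s ^ 2 * (2 * σu ^ 2 + s ^ 2) * hr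

lemma deriv_subsidy (hu : σu ≠ 0) : deriv (subsidy σv σu) = subsidyDeriv σv σu :=
  funext fun s => (hasDerivAt_subsidy hu s).deriv

lemma hasDerivAt_deriv_subsidy (hu : σu ≠ 0) (s : ℝ) :
    HasDerivAt (deriv (subsidy σv σu)) (subsidyDeriv2 σv σu s) s :=
  deriv_subsidy hu ▸ hasDerivAt_subsidyDeriv hu s

lemma deriv_deriv_subsidy (hu : σu ≠ 0) :
    deriv (deriv (subsidy σv σu)) = subsidyDeriv2 σv σu :=
  funext fun s => (hasDerivAt_deriv_subsidy hu s).deriv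

lemma subsidyDeriv2_pos (hv : 0 < σv) (hu : σu ≠ 0) {s : ℝ} (hs : s ^ 2 < 2 * σu ^ 2) :
    0 < subsidyDeriv2 σv σu s := by
  have : 0 < 2 * σu ^ 2 - s ^ 2 := by linarith
  unfold subsidyDeriv2
  positivity

lemma subsidyDeriv2_neg (hv : 0 < σv) (hu : σu ≠ 0) {s : ℝ} (hs : 2 * σu ^ 2 < s ^ 2) :
    subsidyDeriv2 σv σu s < 0 := by
  have : 0 < σv * σu ^ 2 := by positivity
  exact div_neg_of_neg_of_pos (by nlinarith) (by positivity)

lemma subsidyDeriv2_eq_zero_iff (hv : 0 < σv) (hu : σu ≠ 0) {s : ℝ} :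
    subsidyDeriv2 σv σu s = 0 ↔ 2 * σu ^ 2 = s ^ 2 := by
  have : 0 < 2 * (σu ^ 2 + s ^ 2) ^ ((5 : ℝ) / 2) := by positivity
  rw [subsidyDeriv2, div_eq_zero_iff, or_iff_left this.ne', mul_eq_zero, sub_eq_zero]
  simp [hv.ne', hu]

lemma sqrt_two_mul_eq (hu : 0 ≤ σu) : √2 * σu = √(2 * σu ^ 2) := by
  rw [sqrt_mul zero_le_two, sqrt_sq hu]

lemma strictConvexOn_subsidy (hv : 0 < σv) (hu : 0 < σu) :
    StrictConvexOn ℝ (Ioo 0 (√2 * σu)) (subsidy σv σu) := by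
  refine strictConvexOn_of_deriv2_pos' (convex_Ioo _ _)
    (fun s _ => (hasDerivAt_subsidy hu.ne' s).continuousAt.continuousWithinAt) fun s hs => ?_
  rw [sqrt_two_mul_eq hu.le] at hs
  show 0 < deriv (deriv (subsidy σv σu)) s
  rw [deriv_deriv_subsidy hu.ne']
  exact subsidyDeriv2_pos hv hu.ne' ((lt_sqrt hs.1.le).1 hs.2)

lemma strictConcaveOn_subsidy (hv : 0 < σv) (hu : 0 < σu) :
    StrictConcaveOn ℝ (Ioi (√2 * σu)) (subsidy σv σu) := by
  refine strictConcaveOn_of_deriv2_neg' (convex_Ioi _)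
    (fun s _ => (hasDerivAt_subsidy hu.ne' s).continuousAt.continuousWithinAt) fun s hs => ?_
  rw [mem_Ioi, sqrt_two_mul_eq hu.le] at hs
  show deriv (deriv (subsidy σv σu)) s < 0
  rw [deriv_deriv_subsidy hu.ne']
  exact subsidyDeriv2_neg hv hu.ne' ((sqrt_lt' ((sqrt_nonneg _).trans_lt hs)).1 hs)

lemma deriv_deriv_subsidy_eq_zero_iff (hv : 0 < σv) (hu : 0 < σu) {s : ℝ} (hs : 0 < s) :
    deriv (deriv (subsidy σv σu)) s = 0 ↔ s = √2 * σu := by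
  rw [deriv_deriv_subsidy hu.ne', subsidyDeriv2_eq_zero_iff hv hu.ne', sqrt_two_mul_eq hu.le,
    eq_comm (a := s), sqrt_eq_iff_mul_self_eq (by positivity) hs.le, ← sq]

end PrivacySubsidy

open PrivacySubsidy in
/-- Second derivative of the privacy subsidy; convex-then-concave with a unique
inflection at σε = √2·σu. -/
theorem stmt_9 (σv σu : ℝ) (hv : 0 < σv) (hu : 0 < σu) :
    (∀ σε : ℝ, 0 < σε →
      HasDerivAt
        (deriv (fun s : ℝ => σv * s ^ 2 / (2 * Real.sqrt (σu ^ 2 + s ^ 2))))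
        (σv * σu ^ 2 * (2 * σu ^ 2 - σε ^ 2) / (2 * (σu ^ 2 + σε ^ 2) ^ ((5 : ℝ) / 2)))
        σε) ∧
    StrictConvexOn ℝ (Set.Ioo (0 : ℝ) (Real.sqrt 2 * σu))
      (fun s : ℝ => σv * s ^ 2 / (2 * Real.sqrt (σu ^ 2 + s ^ 2))) ∧
    StrictConcaveOn ℝ (Set.Ioi (Real.sqrt 2 * σu))
      (fun s : ℝ => σv * s ^ 2 / (2 * Real.sqrt (σu ^ 2 + s ^ 2))) ∧
    ∀ σε : ℝ, 0 < σε →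
      (deriv (deriv (fun s : ℝ => σv * s ^ 2 / (2 * Real.sqrt (σu ^ 2 + s ^ 2)))) σε = 0
        ↔ σε = Real.sqrt 2 * σu) :=
  ⟨fun σε _ => hasDerivAt_deriv_subsidy hu.ne' σε, strictConvexOn_subsidy hv hu,
    strictConcaveOn_subsidy hv hu, fun _ hε => deriv_deriv_subsidy_eq_zero_iff hv hu hε⟩
end

section
/- As σε → ∞ with σv, σu > 0 fixed, the privacy subsidy satisfies S(σε) − (1/2)·σv·σε → 0; precisely, 0 ≤ (1/2)·σv·σε − S(σε) ≤ σv·σu²/(2σε) for all σε > 0. -/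
/-- High-privacy asymptote with explicit error bound. -/
theorem stmt_11 (σv σu : ℝ) (hv : 0 < σv) (hu : 0 < σu) :
    ∀ σε : ℝ, 0 < σε →
      0 ≤ (1 / 2) * σv * σε - σv * σε ^ 2 / (2 * Real.sqrt (σu ^ 2 + σε ^ 2)) ∧
      (1 / 2) * σv * σε - σv * σε ^ 2 / (2 * Real.sqrt (σu ^ 2 + σε ^ 2))
        ≤ σv * σu ^ 2 / (2 * σε) := by
  intro σε hε
  set s := Real.sqrt (σu ^ 2 + σε ^ 2) with hsdef
  have hs2 : s ^ 2 = σu ^ 2 + σε ^ 2 := Real.sq_sqrt (by positivity)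
  have hspos : 0 < s := Real.sqrt_pos.mpr (by positivity)
  have hsgt : σε < s := by nlinarith [hu.le, hε.le]
  constructor
  · have h1 : σv * σε ^ 2 / (2 * s) ≤ (1 / 2) * σv * σε := by
      rw [div_le_iff₀ (by positivity)]
      nlinarith [mul_pos hv hε]
    linarith
  · rw [sub_le_iff_le_add, div_add_div _ _ (by positivity : (2:ℝ) * σε ≠ 0)
      (by positivity : (2:ℝ) * s ≠ 0), le_div_iff₀ (by positivity)]
    have hs3 : s ^ 3 = (σu ^ 2 + σε ^ 2) * s := by rw [pow_succ, hs2]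
    nlinarith [mul_nonneg (mul_nonneg hv.le (sub_pos.mpr hsgt).le)
      (show (0:ℝ) ≤ s ^ 2 + s * σε - σε ^ 2 by nlinarith)]
end

section
/- For σv, σu > 0 and σε ≥ 0, the leading-order incremental gains of the informed and noise traders coincide: defining πI(σε) = (1/2)σv√(σu²+σε²) and πN(σε) = −σv·σu²/(2√(σu²+σε²)), one has (πI(σε) − πI(0)) − (πN(σε) − πN(0)) = σv·(√(σu²+σε²) − σu)²/(2√(σu²+σε²)), which is O(σε⁴) as σε → 0. -/
/-- Symmetric leading-order split of the subsidy between informed and noise traders. -/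
theorem stmt_13 (σv σu : ℝ) (hv : 0 < σv) (hu : 0 < σu) :
    (∀ σε : ℝ, 0 ≤ σε →
      ((1 / 2) * σv * Real.sqrt (σu ^ 2 + σε ^ 2)
          - (1 / 2) * σv * Real.sqrt (σu ^ 2 + (0 : ℝ) ^ 2))
        - ((-(σv * σu ^ 2 / (2 * Real.sqrt (σu ^ 2 + σε ^ 2))))
          - (-(σv * σu ^ 2 / (2 * Real.sqrt (σu ^ 2 + (0 : ℝ) ^ 2)))))
      = σv * (Real.sqrt (σu ^ 2 + σε ^ 2) - σu) ^ 2
          / (2 * Real.sqrt (σu ^ 2 + σε ^ 2))) ∧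
    ∃ C : ℝ, ∃ δ : ℝ, 0 < δ ∧ ∀ σε : ℝ, 0 ≤ σε → σε ≤ δ →
      σv * (Real.sqrt (σu ^ 2 + σε ^ 2) - σu) ^ 2
          / (2 * Real.sqrt (σu ^ 2 + σε ^ 2)) ≤ C * σε ^ 4 := by
  have h0 : Real.sqrt (σu ^ 2 + (0 : ℝ) ^ 2) = σu := by
    simp [Real.sqrt_sq hu.le]
  have key : ∀ σε : ℝ, 0 < Real.sqrt (σu ^ 2 + σε ^ 2) ∧
      σu ≤ Real.sqrt (σu ^ 2 + σε ^ 2) ∧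
      (Real.sqrt (σu ^ 2 + σε ^ 2)) ^ 2 = σu ^ 2 + σε ^ 2 := by
    intro σε
    have hnn : (0:ℝ) ≤ σu ^ 2 + σε ^ 2 := by positivity
    refine ⟨Real.sqrt_pos.2 (by positivity), ?_, Real.sq_sqrt hnn⟩
    have := Real.sqrt_le_sqrt (show σu ^ 2 ≤ σu ^ 2 + σε ^ 2 by nlinarith)
    rwa [Real.sqrt_sq hu.le] at this
  constructor
  · intro σε _
    obtain ⟨hs, hus, hsq⟩ := key σε
    rw [h0]
    field_simp
    nlinarith [hsq]
  · refine ⟨σv / (8 * σu ^ 3), 1, one_pos, fun σε hε _ => ?_⟩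
    obtain ⟨hs, hus, hsq⟩ := key σε
    have hdiff : Real.sqrt (σu ^ 2 + σε ^ 2) - σu ≤ σε ^ 2 / (2 * σu) := by
      rw [le_div_iff₀ (by positivity)]
      nlinarith [hsq]
    have hd0 : 0 ≤ Real.sqrt (σu ^ 2 + σε ^ 2) - σu := by linarith
    have h1 : (Real.sqrt (σu ^ 2 + σε ^ 2) - σu) ^ 2 ≤ (σε ^ 2 / (2 * σu)) ^ 2 := by
      exact pow_le_pow_left₀ hd0 hdiff 2
    have h2 : σv * (Real.sqrt (σu ^ 2 + σε ^ 2) - σu) ^ 2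
        / (2 * Real.sqrt (σu ^ 2 + σε ^ 2))
        ≤ σv * (σε ^ 2 / (2 * σu)) ^ 2 / (2 * σu) := by
      apply div_le_div₀ (by positivity) (by nlinarith) (by positivity) (by nlinarith)
    calc σv * (Real.sqrt (σu ^ 2 + σε ^ 2) - σu) ^ 2
        / (2 * Real.sqrt (σu ^ 2 + σε ^ 2))
        ≤ σv * (σε ^ 2 / (2 * σu)) ^ 2 / (2 * σu) := h2
      _ = σv / (8 * σu ^ 3) * σε ^ 4 := by ring
end

section
/- For σv, σu > 0 and σε ≥ 0, define total expected absolute volume Q = √(2/π)·(√(σu²+σε²) + σu) and break-even fee rate f = S(σε)/Q with S(σε) = σv·σε²/(2√(σu²+σε²)). Then the informed trader's fee burden f·√(2/π)·√(σu²+σε²) equals (σv/2)·(√(σu²+σε²) − σu), which equals the informed trader's incremental gain πI(σε) − πI(0). -/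
/-!
Rationalising, `σε² / (√(σu² + σε²) + σu) = √(σu² + σε²) - σu`. The informed trader's
volume `√(σu² + σε²)` cancels the one in the denominator of the spread `S(σε)`, so the fee
burden is `(σv / 2) · σε² / (√(σu² + σε²) + σu)`, which is the gain `πI(σε) - πI(0)`
because `√(σu² + 0²) = σu`.
-/

open Real

lemma sq_div_sqrt_sq_add_sq_add_self {a : ℝ} (ha : 0 ≤ a) (b : ℝ) :
    b ^ 2 / (√(a ^ 2 + b ^ 2) + a) = √(a ^ 2 + b ^ 2) - a := by
  have hsq : b ^ 2 = (√(a ^ 2 + b ^ 2) - a) * (√(a ^ 2 + b ^ 2) + a) := by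
    have := sq_sqrt (by positivity : 0 ≤ a ^ 2 + b ^ 2)
    linear_combination -this
  rcases eq_or_ne (√(a ^ 2 + b ^ 2) + a) 0 with hzero | hne
  · have ha0 : a = 0 := by linarith [sqrt_nonneg (a ^ 2 + b ^ 2)]
    simp [ha0]
  · rwa [div_eq_iff hne]

theorem stmt_18_general (σv σu σε : ℝ) (hu : 0 < σu)
    (Q f : ℝ)
    (hQ : Q = Real.sqrt (2 / Real.pi) * (Real.sqrt (σu ^ 2 + σε ^ 2) + σu))
    (hf : f = σv * σε ^ 2 / (2 * Real.sqrt (σu ^ 2 + σε ^ 2)) / Q) :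
    f * (Real.sqrt (2 / Real.pi) * Real.sqrt (σu ^ 2 + σε ^ 2))
      = σv / 2 * (Real.sqrt (σu ^ 2 + σε ^ 2) - σu) ∧
    σv / 2 * (Real.sqrt (σu ^ 2 + σε ^ 2) - σu)
      = (1 / 2) * σv * Real.sqrt (σu ^ 2 + σε ^ 2)
        - (1 / 2) * σv * Real.sqrt (σu ^ 2 + (0 : ℝ) ^ 2) := by
  have hs : 0 < √(σu ^ 2 + σε ^ 2) := sqrt_pos.mpr (by positivity)
  have hc : 0 < √(2 / π) := sqrt_pos.mpr (by positivity)
  constructor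
  · rw [hf, hQ, ← sq_div_sqrt_sq_add_sq_add_self hu.le]
    field_simp
  · rw [zero_pow two_ne_zero, add_zero, sqrt_sq hu.le]
    ring

/-- The informed trader's volume-share of the break-even fee equals its
incremental privacy gain. -/
theorem stmt_18 (σv σu σε : ℝ) (hv : 0 < σv) (hu : 0 < σu) (he : 0 ≤ σε)
    (Q f : ℝ)
    (hQ : Q = Real.sqrt (2 / Real.pi) * (Real.sqrt (σu ^ 2 + σε ^ 2) + σu))
    (hf : f = σv * σε ^ 2 / (2 * Real.sqrt (σu ^ 2 + σε ^ 2)) / Q) :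
    f * (Real.sqrt (2 / Real.pi) * Real.sqrt (σu ^ 2 + σε ^ 2))
      = σv / 2 * (Real.sqrt (σu ^ 2 + σε ^ 2) - σu) ∧
    σv / 2 * (Real.sqrt (σu ^ 2 + σε ^ 2) - σu)
      = (1 / 2) * σv * Real.sqrt (σu ^ 2 + σε ^ 2)
        - (1 / 2) * σv * Real.sqrt (σu ^ 2 + (0 : ℝ) ^ 2) :=
  stmt_18_general σv σu σε hu Q f hQ hf
end

section
/- Under the same fee setup, the noise traders' fee burden f·√(2/π)·σu equals σv·σu·(√(σu²+σε²) − σu)/(2√(σu²+σε²)), which equals πN(σε) − πN(0) where πN(σε) = −σv·σu²/(2√(σu²+σε²)). Consequently, net of fees, πI − f·E|x| = σv·σu/2 and πN − f·E|u| = −σv·σu/2, the classical Kyle values, for every σε ≥ 0. -/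
/-- Noise traders' fee burden equals their incremental gain; net of fees both
trader types revert to classical Kyle values. -/
theorem stmt_19 (σv σu σε : ℝ) (hv : 0 < σv) (hu : 0 < σu) (he : 0 ≤ σε)
    (Q f : ℝ)
    (hQ : Q = Real.sqrt (2 / Real.pi) * (Real.sqrt (σu ^ 2 + σε ^ 2) + σu))
    (hf : f = σv * σε ^ 2 / (2 * Real.sqrt (σu ^ 2 + σε ^ 2)) / Q) :
    f * (Real.sqrt (2 / Real.pi) * σu)
      = σv * σu * (Real.sqrt (σu ^ 2 + σε ^ 2) - σu)
        / (2 * Real.sqrt (σu ^ 2 + σε ^ 2)) ∧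
    σv * σu * (Real.sqrt (σu ^ 2 + σε ^ 2) - σu) / (2 * Real.sqrt (σu ^ 2 + σε ^ 2))
      = (-(σv * σu ^ 2 / (2 * Real.sqrt (σu ^ 2 + σε ^ 2))))
        - (-(σv * σu ^ 2 / (2 * Real.sqrt (σu ^ 2 + (0 : ℝ) ^ 2)))) ∧
    (1 / 2) * σv * Real.sqrt (σu ^ 2 + σε ^ 2)
      - f * (Real.sqrt (2 / Real.pi) * Real.sqrt (σu ^ 2 + σε ^ 2))
      = σv * σu / 2 ∧
    (-(σv * σu ^ 2 / (2 * Real.sqrt (σu ^ 2 + σε ^ 2))))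
      - f * (Real.sqrt (2 / Real.pi) * σu)
      = -(σv * σu / 2) := by
  have hπ : 0 < Real.pi := Real.pi_pos
  set c := Real.sqrt (2 / Real.pi) with hc
  have hcpos : 0 < c := Real.sqrt_pos.mpr (by positivity)
  set s := Real.sqrt (σu ^ 2 + σε ^ 2) with hsdef
  have hspos : 0 < s := Real.sqrt_pos.mpr (by positivity)
  have hs2 : s ^ 2 = σu ^ 2 + σε ^ 2 := Real.sq_sqrt (by positivity)
  have hsu : 0 < s + σu := by linarith
  have h0 : Real.sqrt (σu ^ 2 + (0 : ℝ) ^ 2) = σu := by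
    rw [show σu ^ 2 + (0:ℝ)^2 = σu ^ 2 by ring, Real.sqrt_sq hu.le]
  have hfeq : f = σv * (s - σu) / (2 * s * c) := by
    rw [hf, hQ]
    have hε : σε ^ 2 = s ^ 2 - σu ^ 2 := by linarith
    rw [hε]
    field_simp
    ring
  refine ⟨?_, ?_, ?_, ?_⟩
  · rw [hfeq]; field_simp
  · rw [h0]; field_simp; ring
  · rw [hfeq]; field_simp; ring
  · rw [hfeq]; field_simp; ring
end
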